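/- Let R be an LM-system and suppose f(s1,…,sm) rewrites in one step at the root by a rule l → r to g(t1,…,tn). Then f(s1',…,sm') also rewrites in one step by the same rule l → r to g(t1',…,tn'), where si', tj' are the R-normal forms of si, tj. -/

import Mathlib

/-! Basic first-order terms, positions, substitutions and rewriting. -/

inductive Term (F : Type) : Type
  | var : Nat → Term F
  | app : F → List (Term F) → Term F

namespace Term

def subst {F : Type} (σ : Nat → Term F) : Term F → Term F
  | var n => σ n
  | app f ts => app f (ts.attach.map fun ⟨t, _⟩ => t.subst σ)

def root {F : Type} : Term F → Option F
  | var _ => none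
  | app f _ => some f

def label {F : Type} : Term F → F ⊕ Nat
  | var n => Sum.inr n
  | app f _ => Sum.inl f

def IsVar {F : Type} : Term F → Prop
  | var _ => True
  | app _ _ => False

def varsL {F : Type} : Term F → List Nat
  | var n => [n]
  | app _ ts => (ts.attach.map fun ⟨t, _⟩ => t.varsL).flatten

end Term

abbrev Rule (F : Type) := Term F × Term F
abbrev TRS (F : Type) := Set (Rule F)

/-- `SubtermAt t p u` : the subterm of `t` at position `p` is `u`. -/
inductive SubtermAt {F : Type} : Term F → List Nat → Term F → Prop
  | here (t : Term F) : SubtermAt t [] t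
  | there {f : F} {ts : List (Term F)} {i : Nat} {u : Term F} {p : List Nat} {v : Term F} :
      ts[i]? = some u → SubtermAt u p v → SubtermAt (Term.app f ts) (i :: p) v

/-- `ReplaceAt t p v t'` : replacing the subterm of `t` at position `p` by `v` yields `t'`. -/
inductive ReplaceAt {F : Type} : Term F → List Nat → Term F → Term F → Prop
  | here (t u : Term F) : ReplaceAt t [] u u
  | there {f : F} {ts : List (Term F)} {i : Nat} {u : Term F} {p : List Nat} {v w : Term F} :
      ts[i]? = some u → ReplaceAt u p v w →
      ReplaceAt (Term.app f ts) (i :: p) v (Term.app f (ts.set i w))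

variable {F : Type}

/-- One rewrite step using the given rule (at some position, with some substitution). -/
def RuleStep (ρ : Rule F) (s t : Term F) : Prop :=
  ∃ (σ : Nat → Term F) (p : List Nat),
    SubtermAt s p (ρ.1.subst σ) ∧ ReplaceAt s p (ρ.2.subst σ) t

def OneStep (R : TRS F) (s t : Term F) : Prop := ∃ ρ ∈ R, RuleStep ρ s t

/-- A rewrite step at the root position. -/
def RootStep (R : TRS F) (s t : Term F) : Prop :=
  ∃ ρ ∈ R, ∃ σ : Nat → Term F, s = ρ.1.subst σ ∧ t = ρ.2.subst σ

def StarRW (R : TRS F) : Term F → Term F → Prop := Relation.ReflTransGen (OneStep R)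
def Plus (R : TRS F) : Term F → Term F → Prop := Relation.TransGen (OneStep R)
/-- Convertibility (the congruence / equational theory generated by `R`). -/
def Conv (R : TRS F) : Term F → Term F → Prop := Relation.EqvGen (OneStep R)
def Joinable (R : TRS F) (s t : Term F) : Prop := ∃ u, StarRW R s u ∧ StarRW R t u
def NormalForm (R : TRS F) (t : Term F) : Prop := ∀ u, ¬ OneStep R t u
/-- `t` is the `R`-normal form of `s`. -/
def NFof (R : TRS F) (s t : Term F) : Prop := StarRW R s t ∧ NormalForm R t
def Terminating (R : TRS F) : Prop := WellFounded (fun a b : Term F => OneStep R b a)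
def Confluent (R : TRS F) : Prop := ∀ s t u, StarRW R s t → StarRW R s u → Joinable R t u
def Convergent (R : TRS F) : Prop := Confluent R ∧ Terminating R

/-- every proper subterm is irreducible -/
def EpsIrreducible (R : TRS F) (t : Term F) : Prop :=
  ∀ p u, SubtermAt t p u → p ≠ [] → NormalForm R u

def InnermostRedex (R : TRS F) (t : Term F) : Prop :=
  EpsIrreducible R t ∧ ¬ NormalForm R t

/-- Forward-closed, via the one-step-to-normal-form characterization. -/
def FCclosed (R : TRS F) : Prop :=
  ∀ t, InnermostRedex R t → ∀ u, NFof R t u → OneStep R t u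

def Unifies (σ : Nat → Term F) (s t : Term F) : Prop := s.subst σ = t.subst σ

def IsMGU (σ : Nat → Term F) (s t : Term F) : Prop :=
  Unifies σ s t ∧ ∀ τ, Unifies τ s t → ∃ δ, ∀ x, τ x = (σ x).subst δ

def IsRenaming (ρ : Nat → Term F) : Prop :=
  ∃ f : Nat → Nat, Function.Injective f ∧ ∀ n, ρ n = Term.var (f n)

/-- Redundancy criterion for an oriented equation `e` whose right-hand side is
reachable from its left-hand side: some proper subterm of the lhs is reducible. -/
def Redundant (R : TRS F) (e : Rule F) : Prop :=
  ∃ p u, p ≠ ([] : List Nat) ∧ SubtermAt e.1 p u ∧ ¬ NormalForm R u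

/-- `R₁ ↝ R₂`: forward overlaps of rules of `R₂` (renamed apart) into
right-hand sides of rules of `R₁`, at non-variable positions, via an mgu. -/
def FStep (R₁ R₂ : TRS F) : TRS F :=
  { e | ∃ (l₁ r₁ l₂ r₂ : Term F) (ρ : Nat → Term F) (p : List Nat) (u : Term F)
          (σ : Nat → Term F) (r₁' : Term F),
      (l₁, r₁) ∈ R₁ ∧ (l₂, r₂) ∈ R₂ ∧ IsRenaming ρ ∧
      SubtermAt r₁ p u ∧ ¬ u.IsVar ∧ IsMGU σ u (l₂.subst ρ) ∧
      ReplaceAt r₁ p (r₂.subst ρ) r₁' ∧ e = (l₁.subst σ, r₁'.subst σ) }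

def FCiter (R : TRS F) : Nat → TRS F
  | 0 => R
  | k + 1 => FCiter R k ∪ { e | e ∈ FStep (FCiter R k) R ∧ ¬ Redundant (FCiter R k) e }

def FCinf (R : TRS F) : TRS F := ⋃ k, FCiter R k

/-- Forward-closed, via the forward-closure construction: `FC(R) = R`. -/
def ForwardClosedFC (R : TRS F) : Prop := FCinf R = R

/-- `RHS(R)`: `R` together with the conclusions of right-hand-side critical
pair inferences (second rule renamed apart). -/
def RHSset (R : TRS F) : TRS F :=
  R ∪ { e | ∃ (s t u₀ v₀ : Term F) (ρ σ : Nat → Term F), (s, t) ∈ R ∧ (u₀, v₀) ∈ R ∧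
        IsRenaming ρ ∧ IsMGU σ t (v₀.subst ρ) ∧
        s.subst σ ≠ (u₀.subst ρ).subst σ ∧ e = (s.subst σ, (u₀.subst ρ).subst σ) }

/-- the (unordered) pairs of root symbols of two equations coincide -/
def RootPairSimilar (e₁ e₂ : Rule F) : Prop :=
  (e₁.1.root = e₂.1.root ∧ e₁.2.root = e₂.2.root) ∨
  (e₁.1.root = e₂.2.root ∧ e₁.2.root = e₂.1.root)

def QuasiDet (E : TRS F) : Prop :=
  (∀ e ∈ E, ¬ e.1.IsVar ∧ ¬ e.2.IsVar) ∧
  (∀ e ∈ E, e.1.root ≠ e.2.root) ∧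
  (∀ e₁ ∈ E, ∀ e₂ ∈ E, e₁ ≠ e₂ → ¬ RootPairSimilar e₁ e₂)

def HasRootPairRepetition (E : TRS F) : Prop :=
  ∃ e₁ ∈ E, ∃ e₂ ∈ E, e₁ ≠ e₂ ∧ RootPairSimilar e₁ e₂

def VarPreserving (R : TRS F) : Prop :=
  ∀ e ∈ R, ∀ n, n ∈ Term.varsL e.1 ↔ n ∈ Term.varsL e.2

def RightReduced (R : TRS F) : Prop := ∀ e ∈ R, NormalForm R e.2

def AlmostLeftReduced (R : TRS F) : Prop :=
  ¬ ∃ (l₁ r₁ l₂ r₂ : Term F) (p : List Nat) (u : Term F) (σ : Nat → Term F),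
      (l₁, r₁) ∈ R ∧ (l₂, r₂) ∈ R ∧ p ≠ [] ∧ SubtermAt l₁ p u ∧ u = l₂.subst σ

def NonSubtermCollapsing (R : TRS F) : Prop :=
  ¬ ∃ (t u : Term F) (p : List Nat), p ≠ [] ∧ SubtermAt u p t ∧ Conv R t u

structure LMSystem (R : TRS F) : Prop where
  convergent : Convergent R
  almostLeftReduced : AlmostLeftReduced R
  rightReduced : RightReduced R
  nonCollapsing : NonSubtermCollapsing R
  forwardClosed : FCclosed R
  quasiDet : QuasiDet (RHSset R)

/-- the symbol (function symbol or variable) of a term at a position, if defined -/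
def labelAt {F : Type} : List Nat → Term F → Option (F ⊕ Nat)
  | [], t => some t.label
  | i :: p, Term.app _ ts => (ts[i]?).bind (labelAt p)
  | _ :: _, Term.var _ => none

/-- outermost distinguishing position -/
def ODP (s t : Term F) (p : List Nat) : Prop :=
  (labelAt p s ≠ none ∨ labelAt p t ≠ none) ∧
  labelAt p s ≠ labelAt p t ∧
  ∀ q, q <+: p → q ≠ p → labelAt q s = labelAt q t


/-! Since the arguments of `f(s')` and `g(t')` are in normal form, both terms are
ε-irreducible, and both have the normal form `n` of `f(s)`. By forward closure each of
them is `n` or rewrites to `n` in one root step, so `(f(s'), g(t'))` or its reverse is an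
instance of a rule or of a right-hand-side critical pair, i.e. of an equation of `RHS(R)`
(the case of two root steps needs the mgu of the two right-hand sides). That equation has
root symbols `f` and `g`, like `l → r`, so quasi-determinism of `RHS(R)` makes it `l → r`. -/

lemma List.sizeOf_append_lt {α : Type*} [SizeOf α] (xs ys : List α) :
    sizeOf (xs ++ ys) < sizeOf xs + sizeOf ys := by
  induction xs with
  | nil => simp
  | cons x xs ih => simp only [List.cons_append, List.cons.sizeOf_spec]; omega

lemma Prod.lex_lt_of_le_of_lt {a b c d : Nat} (hab : a ≤ b) (hcd : c < d) :
    Prod.Lex (· < ·) (· < ·) (a, c) (b, d) :=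
  Prod.lex_def.2 (by omega)

namespace Term

open Function

@[simp] lemma subst_var (σ : Nat → Term F) (n : Nat) : (var n).subst σ = σ n := by
  rw [subst]

@[simp] lemma subst_app (σ : Nat → Term F) (f : F) (ts : List (Term F)) :
    (app f ts).subst σ = app f (ts.map (·.subst σ)) := by
  rw [subst, List.attach_map_val]

@[simp] lemma varsL_var (n : Nat) : (var n : Term F).varsL = [n] := by
  rw [varsL]

@[simp] lemma mem_varsL_app {n : Nat} {f : F} {ts : List (Term F)} :
    n ∈ (app f ts).varsL ↔ ∃ t ∈ ts, n ∈ t.varsL := by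
  rw [varsL, List.attach_map_val]
  simp

@[elab_as_elim]
theorem induction_on {P : Term F → Prop} (t : Term F) (var : ∀ n, P (var n))
    (app : ∀ f ts, (∀ t ∈ ts, P t) → P (app f ts)) : P t :=
  match t with
  | .var n => var n
  | .app f ts => app f ts fun t _ => induction_on t var app

lemma subst_subst (σ δ : Nat → Term F) (t : Term F) :
    (t.subst σ).subst δ = t.subst fun n => (σ n).subst δ := by
  induction t using induction_on with
  | var n => simp
  | app f ts ih => simpa using List.map_congr_left ih

lemma subst_congr {σ τ : Nat → Term F} {t : Term F} (h : ∀ n ∈ t.varsL, σ n = τ n) :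
    t.subst σ = t.subst τ := by
  induction t using induction_on with
  | var n => simpa using h
  | app f ts ih =>
    simpa using List.map_congr_left fun u hu => ih u hu fun n hn => h n (by simpa using ⟨u, hu, hn⟩)

@[simp] lemma subst_var_eq_self (t : Term F) : t.subst var = t := by
  induction t using induction_on with
  | var n => simp
  | app f ts ih => simpa using List.map_congr_left ih

lemma mem_varsL_subst {m : Nat} {σ : Nat → Term F} {t : Term F} :
    m ∈ (t.subst σ).varsL ↔ ∃ n ∈ t.varsL, m ∈ (σ n).varsL := by
  induction t using induction_on with
  | var n => simp
  | app f ts ih =>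
    simp only [subst_app, mem_varsL_app, List.mem_map]
    constructor
    · rintro ⟨_, ⟨u, hu, rfl⟩, hm⟩
      obtain ⟨n, hn, hmn⟩ := (ih u hu).1 hm
      exact ⟨n, ⟨u, hu, hn⟩, hmn⟩
    · rintro ⟨n, ⟨u, hu, hn⟩, hmn⟩
      exact ⟨u.subst σ, ⟨u, hu, rfl⟩, (ih u hu).2 ⟨n, hn, hmn⟩⟩

lemma sizeOf_le_sizeOf_subst {n : Nat} {t : Term F} (h : n ∈ t.varsL) (σ : Nat → Term F) :
    sizeOf (σ n) ≤ sizeOf (t.subst σ) := by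
  induction t using induction_on with
  | var m => simp_all
  | app f ts ih =>
    obtain ⟨u, hu, hn⟩ := mem_varsL_app.1 h
    have := List.sizeOf_lt_of_mem (List.mem_map_of_mem (f := (·.subst σ)) hu)
    simp only [subst_app, app.sizeOf_spec]
    have := ih u hu hn
    omega

def UnifiesAll (θ : Nat → Term F) (xs ys : List (Term F)) : Prop :=
  xs.map (·.subst θ) = ys.map (·.subst θ)

def IsMostGeneral (P : (Nat → Term F) → Prop) (σ : Nat → Term F) : Prop :=
  P σ ∧ ∀ τ, P τ → ∃ δ, ∀ x, τ x = (σ x).subst δ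

def varsList (xs : List (Term F)) : Finset Nat := (xs.flatMap varsL).toFinset

lemma mem_varsList {n : Nat} {xs : List (Term F)} :
    n ∈ varsList xs ↔ ∃ t ∈ xs, n ∈ t.varsL := by
  simp [varsList]

@[simp] lemma varsList_cons (t : Term F) (xs : List (Term F)) :
    varsList (t :: xs) = t.varsL.toFinset ∪ varsList xs := by
  simp [varsList]

@[simp] lemma varsList_append (xs ys : List (Term F)) :
    varsList (xs ++ ys) = varsList xs ∪ varsList ys := by
  simp [varsList]

@[simp] lemma toFinset_varsL_app (f : F) (ts : List (Term F)) :
    (app f ts).varsL.toFinset = varsList ts := by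
  ext; simp [mem_varsList]

lemma IsMostGeneral.congr {P Q : (Nat → Term F) → Prop} {σ : Nat → Term F}
    (h : ∀ τ, P τ ↔ Q τ) (hσ : IsMostGeneral P σ) : IsMostGeneral Q σ :=
  ⟨(h σ).1 hσ.1, fun τ hτ => hσ.2 τ ((h τ).2 hτ)⟩

lemma unifiesAll_cons {θ : Nat → Term F} {s t : Term F} {xs ys : List (Term F)} :
    UnifiesAll θ (s :: xs) (t :: ys) ↔ s.subst θ = t.subst θ ∧ UnifiesAll θ xs ys := by
  simp [UnifiesAll]

lemma unifiesAll_cons_comm {θ : Nat → Term F} {s t : Term F} {xs ys : List (Term F)} :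
    UnifiesAll θ (s :: xs) (t :: ys) ↔ UnifiesAll θ (t :: xs) (s :: ys) := by
  simp only [unifiesAll_cons, eq_comm]

lemma unifiesAll_app_cons {θ : Nat → Term F} {f : F} {ss ts xs ys : List (Term F)}
    (hlen : ss.length = ts.length) :
    UnifiesAll θ (app f ss :: xs) (app f ts :: ys) ↔ UnifiesAll θ (ss ++ xs) (ts ++ ys) := by
  simp only [UnifiesAll, List.map_cons, List.map_append, List.cons.injEq, subst_app, app.injEq,
    true_and]
  exact (List.append_eq_append_iff_of_size_eq_left (by simpa using hlen)).symm

lemma not_mem_varsL_of_subst_eq {θ : Nat → Term F} {n : Nat} {t : Term F}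
    (h : θ n = t.subst θ) (ht : t ≠ var n) : n ∉ t.varsL := by
  intro hn
  cases t with
  | var m => simp_all [eq_comm]
  | app f ts =>
    obtain ⟨u, hu, hnu⟩ := mem_varsL_app.1 hn
    have := List.sizeOf_lt_of_mem (List.mem_map_of_mem (f := (·.subst θ)) hu)
    have := sizeOf_le_sizeOf_subst hnu θ
    simp only [h, subst_app, app.sizeOf_spec] at *
    omega

lemma subst_subst_update_var {τ : Nat → Term F} {n : Nat} {t : Term F}
    (h : τ n = t.subst τ) (u : Term F) : (u.subst (update var n t)).subst τ = u.subst τ := by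
  rw [subst_subst]
  refine subst_congr fun m _ => ?_
  by_cases hm : m = n
  · subst hm; simp [h]
  · simp [hm]

lemma subst_update_var_of_not_mem {n : Nat} {t : Term F} (hn : n ∉ t.varsL) :
    t.subst (update var n t) = t := by
  conv_rhs => rw [← subst_var_eq_self t]
  exact subst_congr fun m hm => update_of_ne (ne_of_mem_of_not_mem hm hn) _ _

lemma unifiesAll_map_update_var_iff {τ : Nat → Term F} {n : Nat} {t : Term F}
    {xs ys : List (Term F)} (h : τ n = t.subst τ) :
    UnifiesAll τ (xs.map (·.subst (update var n t))) (ys.map (·.subst (update var n t))) ↔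
      UnifiesAll τ xs ys := by
  simp only [UnifiesAll, List.map_map, Function.comp_def, subst_subst_update_var h]

lemma isMostGeneral_unifiesAll_var_cons {n : Nat} {t : Term F} {xs ys : List (Term F)}
    {σ : Nat → Term F} (hn : n ∉ t.varsL)
    (hσ : IsMostGeneral (UnifiesAll · (xs.map (·.subst (update var n t)))
      (ys.map (·.subst (update var n t)))) σ) :
    IsMostGeneral (UnifiesAll · (var n :: xs) (t :: ys)) fun x => (update var n t x).subst σ := by
  have hσn : (update var n t n).subst σ = t.subst fun x => (update var n t x).subst σ := by
    rw [← subst_subst, subst_update_var_of_not_mem hn, update_self]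
  refine ⟨unifiesAll_cons.2 ⟨by rw [subst_var, hσn], ?_⟩, fun τ hτ => ?_⟩
  · simpa [UnifiesAll, List.map_map, Function.comp_def, subst_subst] using hσ.1
  · obtain ⟨hτn, hτ⟩ := unifiesAll_cons.1 hτ
    rw [subst_var] at hτn
    obtain ⟨δ, hδ⟩ := hσ.2 τ ((unifiesAll_map_update_var_iff hτn).2 hτ)
    refine ⟨δ, fun x => ?_⟩
    have := subst_subst_update_var hτn (var x)
    rw [subst_var, subst_var] at this
    rw [← this, subst_subst]
    exact subst_congr fun y _ => hδ y

lemma mem_varsL_subst_update_var {m n : Nat} {t u : Term F} (hn : n ∉ t.varsL)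
    (hm : m ∈ (u.subst (update var n t)).varsL) : m ≠ n ∧ (m ∈ t.varsL ∨ m ∈ u.varsL) := by
  obtain ⟨k, hk, hmk⟩ := mem_varsL_subst.1 hm
  by_cases hkn : k = n
  · subst hkn
    rw [update_self] at hmk
    exact ⟨ne_of_mem_of_not_mem hmk hn, Or.inl hmk⟩
  · simp only [update_of_ne hkn, varsL_var, List.mem_singleton] at hmk
    exact ⟨hmk ▸ hkn, Or.inr (hmk ▸ hk)⟩

lemma card_varsList_map_update_var_lt {n : Nat} {t : Term F} {xs ys : List (Term F)}
    (hn : n ∉ t.varsL) :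
    (varsList (xs.map (·.subst (update var n t))) ∪
      varsList (ys.map (·.subst (update var n t)))).card <
      (varsList (var n :: xs) ∪ varsList (t :: ys)).card := by
  refine lt_of_le_of_lt (Finset.card_le_card fun m hm => ?_)
    (Finset.card_erase_lt_of_mem (by simp : n ∈ varsList (var n :: xs) ∪ varsList (t :: ys)))
  simp only [Finset.mem_union, mem_varsList, List.mem_map] at hm
  obtain ⟨_, ⟨u, hu, rfl⟩, hmu⟩ | ⟨_, ⟨u, hu, rfl⟩, hmu⟩ := hm <;>
  · obtain ⟨hmn, hm⟩ := mem_varsL_subst_update_var hn hmu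
    simp only [Finset.mem_erase, varsList_cons, Finset.mem_union, List.mem_toFinset, mem_varsList]
    grind

theorem exists_isMostGeneral_unifiesAll :
    ∀ xs ys : List (Term F), (∃ θ, UnifiesAll θ xs ys) →
      ∃ σ, IsMostGeneral (UnifiesAll · xs ys) σ
  | [], [], _ => ⟨var, rfl, fun τ _ => ⟨τ, by simp⟩⟩
  | [], _ :: _, ⟨_, h⟩ | _ :: _, [], ⟨_, h⟩ => by simp [UnifiesAll] at h
  | var n :: xs, t :: ys, ⟨θ, h⟩ => by
    obtain ⟨hθn, hθ⟩ := unifiesAll_cons.1 h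
    rw [subst_var] at hθn
    by_cases ht : t = var n
    · subst ht
      obtain ⟨σ, hσ⟩ := exists_isMostGeneral_unifiesAll xs ys ⟨θ, hθ⟩
      exact ⟨σ, hσ.congr fun τ => by simp [unifiesAll_cons]⟩
    · have hn := not_mem_varsL_of_subst_eq hθn ht
      obtain ⟨σ, hσ⟩ := exists_isMostGeneral_unifiesAll (xs.map (·.subst (update var n t)))
        (ys.map (·.subst (update var n t))) ⟨θ, (unifiesAll_map_update_var_iff hθn).2 hθ⟩
      exact ⟨_, isMostGeneral_unifiesAll_var_cons hn hσ⟩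
  | app f ss :: xs, var n :: ys, ⟨θ, h⟩ => by
    obtain ⟨hθn, hθ⟩ := unifiesAll_cons.1 (unifiesAll_cons_comm.1 h)
    rw [subst_var] at hθn
    have hn := not_mem_varsL_of_subst_eq hθn (by simp)
    obtain ⟨σ, hσ⟩ := exists_isMostGeneral_unifiesAll (xs.map (·.subst (update var n (app f ss))))
      (ys.map (·.subst (update var n (app f ss)))) ⟨θ, (unifiesAll_map_update_var_iff hθn).2 hθ⟩
    exact ⟨_, (isMostGeneral_unifiesAll_var_cons hn hσ).congr fun τ => unifiesAll_cons_comm⟩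
  | app f ss :: xs, app g ts :: ys, ⟨θ, h⟩ => by
    obtain ⟨hθfg, hθ⟩ := unifiesAll_cons.1 h
    simp only [subst_app, app.injEq] at hθfg
    obtain ⟨rfl, hθss⟩ := hθfg
    have hlen : ss.length = ts.length := by simpa using congrArg List.length hθss
    obtain ⟨σ, hσ⟩ := exists_isMostGeneral_unifiesAll (ss ++ xs) (ts ++ ys)
      ⟨θ, (unifiesAll_app_cons hlen).1 h⟩
    exact ⟨σ, hσ.congr fun τ => (unifiesAll_app_cons hlen).symm⟩
-- Variable elimination removes a variable (occurs check); the other steps keep the variables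
-- and shrink the size.
termination_by xs ys => ((varsList xs ∪ varsList ys).card, sizeOf xs + sizeOf ys)
decreasing_by
  all_goals simp_wf
  · refine Prod.lex_lt_of_le_of_lt (Finset.card_le_card fun m => ?_) (by omega)
    simp only [Finset.mem_union, Finset.mem_insert]
    tauto
  · exact Prod.Lex.left _ _ (by simpa using card_varsList_map_update_var_lt hn)
  · refine Prod.Lex.left _ _ ((card_varsList_map_update_var_lt hn).trans_eq (congrArg _ ?_))
    ext
    simp only [varsList_cons, toFinset_varsL_app, varsL_var, List.toFinset_cons, List.toFinset_nil,
      Finset.mem_union, Finset.mem_insert]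
    tauto
  · have := List.sizeOf_append_lt ss xs
    have := List.sizeOf_append_lt ts ys
    exact Prod.Lex.right _ (by omega)

end Term

theorem exists_isMGU {θ : Nat → Term F} {s t : Term F} (h : Unifies θ s t) :
    ∃ σ, IsMGU σ s t := by
  have key : ∀ τ, Term.UnifiesAll τ [s] [t] ↔ Unifies τ s t := fun τ => by
    simp [Term.UnifiesAll, Unifies]
  obtain ⟨σ, hσ⟩ := Term.exists_isMostGeneral_unifiesAll [s] [t] ⟨θ, (key θ).2 h⟩
  exact ⟨σ, hσ.congr key⟩

lemma exists_renaming_apart (V : Finset Nat) (δ₁ δ₂ : Nat → Term F) :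
    ∃ ρ θ : Nat → Term F, IsRenaming ρ ∧ (∀ x ∈ V, θ x = δ₁ x) ∧ ∀ x, (ρ x).subst θ = δ₂ x := by
  set N := V.sup id + 1
  have hV : ∀ x ∈ V, x < N := fun x hx => Nat.lt_succ_of_le (Finset.le_sup (f := id) hx)
  refine ⟨fun x => .var (x + N), fun x => if x < N then δ₁ x else δ₂ (x - N),
    ⟨(· + N), add_left_injective N, fun _ => rfl⟩, fun x hx => if_pos (hV x hx), fun x => ?_⟩
  simp

section Rewriting

variable {R : TRS F}

lemma SubtermAt.append {t u v : Term F} {p q : List Nat} (h₁ : SubtermAt t p u)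
    (h₂ : SubtermAt u q v) : SubtermAt t (p ++ q) v := by
  induction h₁ with
  | here => exact h₂
  | there hi _ ih => exact .there hi (ih h₂)

lemma SubtermAt.exists_replaceAt {t u : Term F} {p : List Nat} (h : SubtermAt t p u)
    (v : Term F) : ∃ t', ReplaceAt t p v t' := by
  induction h with
  | here => exact ⟨v, .here _ _⟩
  | there hi _ ih =>
    obtain ⟨t', ht'⟩ := ih
    exact ⟨_, .there hi ht'⟩

lemma SubtermAt.eq_of_nil {t u : Term F} (h : SubtermAt t [] u) : t = u := by
  cases h; rfl

lemma ReplaceAt.eq_of_nil {t v w : Term F} (h : ReplaceAt t [] v w) : w = v := by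
  cases h; rfl

lemma oneStep_subst {ρ : Rule F} (hρ : ρ ∈ R) (σ : Nat → Term F) :
    OneStep R (ρ.1.subst σ) (ρ.2.subst σ) :=
  ⟨ρ, hρ, σ, [], .here _, .here _ _⟩

lemma NormalForm.subtermAt {t u : Term F} {p : List Nat} (ht : NormalForm R t)
    (h : SubtermAt t p u) : NormalForm R u := by
  rintro u' ⟨ρ, hρ, σ, q, hsub, -⟩
  obtain ⟨t', ht'⟩ := (h.append hsub).exists_replaceAt (ρ.2.subst σ)
  exact ht t' ⟨ρ, hρ, σ, p ++ q, h.append hsub, ht'⟩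

lemma NormalForm.eq_of_starRW {t u : Term F} (ht : NormalForm R t) (h : StarRW R t u) :
    t = u := by
  rcases h.cases_head with rfl | ⟨v, hv, -⟩
  · rfl
  · exact absurd hv (ht v)

lemma Confluent.nfOf_of_starRW (hR : Confluent R) {s a b n : Term F} (ha : StarRW R s a)
    (hb : StarRW R s b) (hn : NFof R a n) : NFof R b n := by
  obtain ⟨w, hbw, hnw⟩ := hR s b n hb (ha.trans hn.1)
  rw [← hn.2.eq_of_starRW hnw] at hbw
  exact ⟨hbw, hn.2⟩

lemma exists_nfOf (hR : Terminating R) (t : Term F) : ∃ n, NFof R t n := by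
  induction t using hR.induction with
  | _ t ih =>
    by_cases ht : NormalForm R t
    · exact ⟨t, .refl, ht⟩
    · obtain ⟨u, hu⟩ := not_forall_not.1 ht
      obtain ⟨n, hun, hn⟩ := ih u hu
      exact ⟨n, .head hu hun, hn⟩

lemma OneStep.app_middle {a b : Term F} (h : OneStep R a b) (f : F) (pre suf : List (Term F)) :
    OneStep R (.app f (pre ++ a :: suf)) (.app f (pre ++ b :: suf)) := by
  obtain ⟨ρ, hρ, σ, p, hsub, hrep⟩ := h
  have hi : (pre ++ a :: suf)[pre.length]? = some a := by simp
  refine ⟨ρ, hρ, σ, pre.length :: p, .there hi hsub, ?_⟩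
  simpa using ReplaceAt.there (f := f) hi hrep

lemma StarRW.app_append {ss ss' : List (Term F)} (h : List.Forall₂ (StarRW R) ss ss') (f : F)
    (pre : List (Term F)) : StarRW R (.app f (pre ++ ss)) (.app f (pre ++ ss')) := by
  induction h generalizing pre with
  | nil => exact .refl
  | @cons a b l₁ l₂ hab _ ih =>
    refine .trans (Relation.ReflTransGen.lift (fun x => Term.app f (pre ++ x :: l₁))
      (fun _ _ (h : OneStep R _ _) => h.app_middle f pre l₁) _ _ hab) ?_
    simpa [StarRW] using ih (pre ++ [b])

lemma StarRW.app {ss ss' : List (Term F)} (h : List.Forall₂ (StarRW R) ss ss') (f : F) :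
    StarRW R (.app f ss) (.app f ss') := by
  simpa using StarRW.app_append h f []

lemma epsIrreducible_app {f : F} {ts : List (Term F)} (h : ∀ t ∈ ts, NormalForm R t) :
    EpsIrreducible R (.app f ts) := by
  rintro _ u (_ | ⟨hi, hsub⟩) hne
  · exact absurd rfl hne
  · exact (h _ (List.mem_of_getElem? hi)).subtermAt hsub

lemma OneStep.rootStep {s u : Term F} (h : OneStep R s u) (hs : EpsIrreducible R s) :
    RootStep R s u := by
  obtain ⟨ρ, hρ, σ, _ | ⟨i, q⟩, hsub, hrep⟩ := h
  · exact ⟨ρ, hρ, σ, hsub.eq_of_nil, hrep.eq_of_nil⟩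
  · exact absurd (oneStep_subst hρ σ) (hs _ _ hsub (List.cons_ne_nil i q) _)

lemma eq_or_rootStep_of_nfOf (hR : FCclosed R) {s n : Term F} (hs : EpsIrreducible R s)
    (h : NFof R s n) : s = n ∨ RootStep R s n := by
  by_cases hnf : NormalForm R s
  · exact .inl (hnf.eq_of_starRW h.1)
  · exact .inr ((hR s ⟨hs, hnf⟩ n h).rootStep hs)

lemma RootStep.exists_rhsSet {s t : Term F} (h : RootStep R s t) :
    ∃ e ∈ RHSset R, ∃ δ, e.1.subst δ = s ∧ e.2.subst δ = t := by
  obtain ⟨e, he, δ, rfl, rfl⟩ := h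
  exact ⟨e, .inl he, δ, rfl, rfl⟩

lemma exists_rhsSet_of_rootStep_of_rootStep {s t u : Term F} (hs : RootStep R s u)
    (ht : RootStep R t u) (hne : s ≠ t) :
    ∃ e ∈ RHSset R, ∃ δ, e.1.subst δ = s ∧ e.2.subst δ = t := by
  obtain ⟨⟨l₁, r₁⟩, h₁, δ₁, rfl, hu⟩ := hs
  obtain ⟨⟨l₂, r₂⟩, h₂, δ₂, rfl, rfl⟩ := ht
  obtain ⟨ρ, θ, hρ, hθ₁, hθ₂⟩ := exists_renaming_apart (l₁.varsL ++ r₁.varsL).toFinset δ₁ δ₂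
  have hθl : l₁.subst θ = l₁.subst δ₁ := Term.subst_congr fun x hx => hθ₁ x (by simp [hx])
  have hθr : r₁.subst θ = r₁.subst δ₁ := Term.subst_congr fun x hx => hθ₁ x (by simp [hx])
  have hρθ (a : Term F) : (a.subst ρ).subst θ = a.subst δ₂ := by
    rw [Term.subst_subst]
    exact Term.subst_congr fun x _ => hθ₂ x
  have hunif : Unifies θ r₁ (r₂.subst ρ) := by
    rw [Unifies, hθr, hρθ]
    exact hu.symm
  obtain ⟨σ, hσ⟩ := exists_isMGU hunif
  obtain ⟨δ, hδ⟩ := hσ.2 θ hunif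
  have hσδ (a : Term F) : (a.subst σ).subst δ = a.subst θ := by
    rw [Term.subst_subst]
    exact Term.subst_congr fun x _ => (hδ x).symm
  refine ⟨(l₁.subst σ, (l₂.subst ρ).subst σ), .inr ⟨l₁, r₁, l₂, r₂, ρ, σ, h₁, h₂, hρ, hσ, ?_, rfl⟩,
    δ, by simp [hσδ, hθl], by simp [hσδ, hρθ]⟩
  intro heq
  apply hne
  rw [← hθl, ← hρθ, ← hσδ, ← hσδ, heq]

lemma exists_rhsSet_of_nfOf (hR : FCclosed R) {s t n : Term F} (hs : EpsIrreducible R s)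
    (ht : EpsIrreducible R t) (hsn : NFof R s n) (htn : NFof R t n) (hne : s ≠ t) :
    ∃ e ∈ RHSset R, ∃ δ, e.1.subst δ = s ∧ e.2.subst δ = t ∨ e.1.subst δ = t ∧ e.2.subst δ = s := by
  rcases eq_or_rootStep_of_nfOf hR hs hsn with rfl | hs'
  · rcases eq_or_rootStep_of_nfOf hR ht htn with rfl | ht'
    · exact absurd rfl hne
    · obtain ⟨e, he, δ, h⟩ := ht'.exists_rhsSet
      exact ⟨e, he, δ, .inr h⟩
  · rcases eq_or_rootStep_of_nfOf hR ht htn with rfl | ht'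
    · obtain ⟨e, he, δ, h⟩ := hs'.exists_rhsSet
      exact ⟨e, he, δ, .inl h⟩
    · obtain ⟨e, he, δ, h⟩ := exists_rhsSet_of_rootStep_of_rootStep hs' ht' hne
      exact ⟨e, he, δ, .inl h⟩

lemma forall_normalForm_of_forall₂_nfOf {ss ss' : List (Term F)}
    (h : List.Forall₂ (NFof R) ss ss') : ∀ t ∈ ss', NormalForm R t := by
  induction h <;> simp_all [NFof]

end Rewriting

lemma Term.root_eq_of_subst_eq_app {t : Term F} (ht : ¬ t.IsVar) {δ : Nat → Term F} {f : F}
    {ts : List (Term F)} (h : t.subst δ = .app f ts) : t.root = some f := by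
  cases t with
  | var n => exact absurd trivial ht
  | app g us =>
    simp only [Term.subst_app, Term.app.injEq] at h
    simp [Term.root, h.1]

namespace QuasiDet

variable {E : TRS F}

lemma root_fst (hE : QuasiDet E) {e : Rule F} (he : e ∈ E) {δ : Nat → Term F} {f : F}
    {ts : List (Term F)} (h : e.1.subst δ = .app f ts) : e.1.root = some f :=
  Term.root_eq_of_subst_eq_app (hE.1 e he).1 h

lemma root_snd (hE : QuasiDet E) {e : Rule F} (he : e ∈ E) {δ : Nat → Term F} {f : F}
    {ts : List (Term F)} (h : e.2.subst δ = .app f ts) : e.2.root = some f :=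
  Term.root_eq_of_subst_eq_app (hE.1 e he).2 h

lemma eq_of_rootPairSimilar (hE : QuasiDet E) {e₁ e₂ : Rule F} (h₁ : e₁ ∈ E) (h₂ : e₂ ∈ E)
    (h : RootPairSimilar e₁ e₂) : e₁ = e₂ := by
  by_contra hne
  exact hE.2.2 e₁ h₁ e₂ h₂ hne h

end QuasiDet

/-- if `f(s₁,…,sₘ)` root-rewrites by `l → r` to `g(t₁,…,tₙ)`, then so do
the corresponding terms with normalized arguments, by the same rule. -/
theorem commuting_square {F : Type} (R : TRS F) (hlm : LMSystem R)
    (l r : Term F) (hrule : (l, r) ∈ R)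
    (f g : F) (ss ts ss' ts' : List (Term F)) (σ : Nat → Term F)
    (h1 : Term.app f ss = l.subst σ) (h2 : Term.app g ts = r.subst σ)
    (hss : List.Forall₂ (NFof R) ss ss') (hts : List.Forall₂ (NFof R) ts ts') :
    ∃ τ : Nat → Term F, Term.app f ss' = l.subst τ ∧ Term.app g ts' = r.subst τ := by
  have hQ := hlm.quasiDet
  have hlr : (l, r) ∈ RHSset R := .inl hrule
  have hl : l.root = some f := hQ.root_fst hlr h1.symm
  have hr : r.root = some g := hQ.root_snd hlr h2.symm
  have hfg : f ≠ g := fun hfg => hQ.2.1 _ hlr (by simp [hl, hr, hfg])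
  have hs' : StarRW R (.app f ss) (.app f ss') := StarRW.app (hss.imp fun _ _ => And.left) f
  have ht' : StarRW R (.app f ss) (.app g ts') := .head (h1 ▸ h2 ▸ oneStep_subst hrule σ)
    (StarRW.app (hts.imp fun _ _ => And.left) g)
  obtain ⟨n, hn⟩ := exists_nfOf hlm.convergent.2 (.app f ss')
  obtain ⟨e, he, δ, ⟨he₁, he₂⟩ | ⟨he₁, he₂⟩⟩ := exists_rhsSet_of_nfOf hlm.forwardClosed
    (epsIrreducible_app (forall_normalForm_of_forall₂_nfOf hss))
    (epsIrreducible_app (forall_normalForm_of_forall₂_nfOf hts)) hn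
    (hlm.convergent.1.nfOf_of_starRW hs' ht' hn) (by simp [hfg])
  · obtain rfl := hQ.eq_of_rootPairSimilar he hlr
      (.inl ⟨(hQ.root_fst he he₁).trans hl.symm, (hQ.root_snd he he₂).trans hr.symm⟩)
    exact ⟨δ, he₁.symm, he₂.symm⟩
  · obtain rfl := hQ.eq_of_rootPairSimilar he hlr
      (.inr ⟨(hQ.root_fst he he₁).trans hr.symm, (hQ.root_snd he he₂).trans hl.symm⟩)
    exact absurd ((hQ.root_fst he he₁).symm.trans hl) (by simpa using hfg.symm)
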